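/- arXiv:0801.1526 — 4 statements merged into one kernel-verified Lean document; each statement's English description precedes it below -/
import Mathlib

section
/- The map τ is well-defined on (W × W)/W(χ) for the diagonal right action: for every w ∈ W with wχ = χ and all w₁, w₂ ∈ W, one has τ(w₁ w, w₂ w) = τ(w₁, w₂). -/
open scoped InnerProductSpace

noncomputable section

/-- The reflection `s_α` in the hyperplane orthogonal to `α`. -/
def sRefl {V : Type*} [NormedAddCommGroup V] [InnerProductSpace ℝ V] [FiniteDimensional ℝ V]
    (α : V) : V ≃ₗᵢ[ℝ] V :=
  Submodule.reflection (ℝ ∙ α)ᗮ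

/-- `r_n(w) = {α ∈ Δ : ⟨α, χ⟩ = n and wα ∈ Δ⁺}`. -/
def rW {V : Type*} [NormedAddCommGroup V] [InnerProductSpace ℝ V]
    (Δ pos : Finset V) (χ : V) (n : ℤ) (w : V ≃ₗᵢ[ℝ] V) : Set V :=
  {α : V | α ∈ Δ ∧ ⟪α, χ⟫_ℝ = (n : ℝ) ∧ w α ∈ pos}

/-- `τ(w₁,w₂) = #(r₂(w₁) ∆ r₂(w₂)) − #(r₀(w₁) ∆ r₀(w₂))`. -/
def tau {V : Type*} [NormedAddCommGroup V] [InnerProductSpace ℝ V]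
    (Δ pos : Finset V) (χ : V) (w₁ w₂ : V ≃ₗᵢ[ℝ] V) : ℤ :=
  ((symmDiff (rW Δ pos χ 2 w₁) (rW Δ pos χ 2 w₂)).ncard : ℤ)
    - ((symmDiff (rW Δ pos χ 0 w₁) (rW Δ pos χ 0 w₂)).ncard : ℤ)

/-!
The reflections in roots map the finite set `Δ` into itself, hence permute it, so every element
`w` of the Weyl group permutes `Δ` and preserves the inner product. If `w` also fixes `χ`, then
`α ↦ wα` maps `r_n(u w)` bijectively onto `r_n(u)` for every `u`. Hence
`r_n(w₁ w) ∆ r_n(w₂ w)` is the preimage of `r_n(w₁) ∆ r_n(w₂)` under a bijection, and both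
cardinalities entering `τ` are unchanged.
-/

section

variable {V : Type*} [NormedAddCommGroup V] [InnerProductSpace ℝ V]

def isometryStabilizer (Δ : Finset V) : Subgroup (V ≃ₗᵢ[ℝ] V) where
  carrier := {g | ∀ v, g v ∈ Δ ↔ v ∈ Δ}
  mul_mem' hg hh v := (hg _).trans (hh v)
  one_mem' _ := Iff.rfl
  inv_mem' {g} hg v := by
    simpa using (hg (g⁻¹ v)).symm

lemma mem_isometryStabilizer_of_mapsTo {Δ : Finset V} {g : V ≃ₗᵢ[ℝ] V}
    (h : ∀ v ∈ Δ, g v ∈ Δ) : g ∈ isometryStabilizer Δ := by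
  classical
  have himage : Δ.image g = Δ :=
    Finset.eq_of_subset_of_card_le (fun _ hv => by
      obtain ⟨u, hu, rfl⟩ := Finset.mem_image.mp hv
      exact h u hu)
      (Finset.card_image_of_injective _ g.injective).ge
  refine fun v => ⟨fun hv => ?_, h v⟩
  obtain ⟨u, hu, huv⟩ := Finset.mem_image.mp (himage.symm ▸ hv)
  exact g.injective huv ▸ hu

lemma closure_reflections_le_isometryStabilizer [FiniteDimensional ℝ V] {Δ : Finset V}
    (hrefl : ∀ α ∈ Δ, ∀ β ∈ Δ, sRefl α β ∈ Δ) :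
    Subgroup.closure {e : V ≃ₗᵢ[ℝ] V | ∃ α ∈ Δ, e = sRefl α} ≤ isometryStabilizer Δ :=
  (Subgroup.closure_le _).mpr <| by
    rintro _ ⟨α, hα, rfl⟩
    exact mem_isometryStabilizer_of_mapsTo (hrefl α hα)

variable {Δ pos : Finset V} {χ : V} {w : V ≃ₗᵢ[ℝ] V}

lemma rW_mul_eq_preimage (hw : w ∈ isometryStabilizer Δ) (hχ : w χ = χ) (n : ℤ)
    (u : V ≃ₗᵢ[ℝ] V) : rW Δ pos χ n (u * w) = w ⁻¹' rW Δ pos χ n u := by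
  ext α
  have hinner : ⟪w α, χ⟫_ℝ = ⟪α, χ⟫_ℝ := by
    rw [← hχ, LinearIsometryEquiv.inner_map_map, hχ]
  simp only [rW, Set.mem_ofPred_eq, Set.mem_preimage, hw α, hinner]
  rfl

lemma tau_mul_right (hw : w ∈ isometryStabilizer Δ) (hχ : w χ = χ) (w₁ w₂ : V ≃ₗᵢ[ℝ] V) :
    tau Δ pos χ (w₁ * w) (w₂ * w) = tau Δ pos χ w₁ w₂ := by
  have hsurj : ∀ s : Set V, s ⊆ Set.range w := fun _ => by simp [w.surjective.range_eq]
  simp only [tau, rW_mul_eq_preimage hw hχ, ← Set.preimage_symmDiff,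
    Set.ncard_preimage_of_injective_subset_range w.injective (hsurj _)]

end

theorem stmt4_general
    {V : Type*} [NormedAddCommGroup V] [InnerProductSpace ℝ V] [FiniteDimensional ℝ V]
    (Δ pos : Finset V) (χ : V)
    -- root system axioms: finite (a `Finset`), spanning, reduced, crystallographic,
    -- stable under negation and under the reflections `s_α`
    (hrefl : ∀ α ∈ Δ, ∀ β ∈ Δ, sRefl α β ∈ Δ)
    -- the Weyl group, generated by the reflections in the roots
    (W : Subgroup (V ≃ₗᵢ[ℝ] V))
    (hW : W = Subgroup.closure {e : V ≃ₗᵢ[ℝ] V | ∃ α ∈ Δ, e = sRefl α})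
    :
    ∀ w : V ≃ₗᵢ[ℝ] V, w ∈ W → w χ = χ →
      ∀ w₁ : V ≃ₗᵢ[ℝ] V, w₁ ∈ W → ∀ w₂ : V ≃ₗᵢ[ℝ] V, w₂ ∈ W →
        tau Δ pos χ (w₁ * w) (w₂ * w) = tau Δ pos χ w₁ w₂ := by
  intro w hw hwχ w₁ _ w₂ _
  subst hW
  exact tau_mul_right (closure_reflections_le_isometryStabilizer hrefl hw) hwχ w₁ w₂

theorem stmt4
    {V : Type*} [NormedAddCommGroup V] [InnerProductSpace ℝ V] [FiniteDimensional ℝ V]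
    (Δ pos Pi : Finset V) (χ : V)
    -- root system axioms: finite (a `Finset`), spanning, reduced, crystallographic,
    -- stable under negation and under the reflections `s_α`
    (hspan : Submodule.span ℝ (Δ : Set V) = ⊤)
    (hzero : (0 : V) ∉ Δ)
    (hsym : ∀ α ∈ Δ, -α ∈ Δ)
    (hred : ∀ α ∈ Δ, ∀ t : ℝ, t • α ∈ Δ → t = 1 ∨ t = -1)
    (hcrys : ∀ α ∈ Δ, ∀ β ∈ Δ, ∃ n : ℤ, 2 * ⟪β, α⟫_ℝ / ⟪α, α⟫_ℝ = (n : ℝ))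
    (hrefl : ∀ α ∈ Δ, ∀ β ∈ Δ, sRefl α β ∈ Δ)
    -- positive roots and simple roots
    (hposΔ : pos ⊆ Δ)
    (hpart : ∀ α ∈ Δ, (α ∈ pos ↔ -α ∉ pos))
    (hPipos : Pi ⊆ pos)
    (hindep : LinearIndependent ℝ (fun β : (Pi : Set V) => (β : V)))
    (hcomb : ∀ α ∈ pos, ∃ c : V → ℕ, α = ∑ β ∈ Pi, (c β : ℝ) • β)
    -- the Weyl group, generated by the reflections in the roots
    (W : Subgroup (V ≃ₗᵢ[ℝ] V))
    (hW : W = Subgroup.closure {e : V ≃ₗᵢ[ℝ] V | ∃ α ∈ Δ, e = sRefl α})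
    -- the longest element `w₀`, with `w₀ (Δ⁺) = −Δ⁺`
    (w0 : V ≃ₗᵢ[ℝ] V) (hw0W : w0 ∈ W)
    (hw0pos : (fun x => w0 x) '' (pos : Set V) = (fun x => -x) '' (pos : Set V))
    :
    ∀ w : V ≃ₗᵢ[ℝ] V, w ∈ W → w χ = χ →
      ∀ w₁ : V ≃ₗᵢ[ℝ] V, w₁ ∈ W → ∀ w₂ : V ≃ₗᵢ[ℝ] V, w₂ ∈ W →
        tau Δ pos χ (w₁ * w) (w₂ * w) = tau Δ pos χ w₁ w₂ :=
  stmt4_general Δ pos χ hrefl W hW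
end
end

section
/- Assume w₀χ = −χ. Then for all w₁, w₂ ∈ W one has τ(w₁ w₀, w₂ w₀) = τ(w₁, w₂). -/
open scoped InnerProductSpace

noncomputable section

/-! Right multiplication by `w₀` only relabels roots: `α ↦ w₀ α` identifies `r₀(w w₀)` with
`r₀(w)`, and `α ↦ -w₀ α` identifies `r₂(w w₀)` with the complement of `r₂(w)` in `r₂(Δ)`.
Both identifications are uniform in `w`, and complementing inside a fixed set preserves
symmetric differences. -/

open Set Function

theorem Set.Finite.apply_mem_iff_of_mapsTo {α : Type*} {s : Set α} {f : α → α} (hs : s.Finite)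
    (hf : Injective f) (h : MapsTo f s s) (x : α) : f x ∈ s ↔ x ∈ s := by
  refine ⟨fun hx => ?_, fun hx => h hx⟩
  obtain ⟨y, hy, hyx⟩ := ((hs.injOn_iff_bijOn_of_mapsTo h).mp hf.injOn).surjOn hx
  exact hf hyx ▸ hy

theorem Set.sdiff_symmDiff_sdiff_of_subset {α : Type*} {s t u : Set α} (hs : s ⊆ u) (ht : t ⊆ u) :
    symmDiff (u \ s) (u \ t) = symmDiff s t := by
  ext x
  have := @hs x
  have := @ht x
  simp only [mem_symmDiff, mem_sdiff]
  tauto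

section RootSystem

variable {V : Type*} [NormedAddCommGroup V] [InnerProductSpace ℝ V]

theorem LinearIsometryEquiv.apply_mem_iff_of_mem_closure {S : Set (V ≃ₗᵢ[ℝ] V)} {s : Set V}
    (hs : s.Finite) (hS : ∀ e ∈ S, MapsTo e s s) {e : V ≃ₗᵢ[ℝ] V} (he : e ∈ Subgroup.closure S)
    (x : V) : e x ∈ s ↔ x ∈ s := by
  induction he using Subgroup.closure_induction generalizing x with
  | mem e he => exact hs.apply_mem_iff_of_mapsTo e.injective (hS e he) x
  | one => rfl
  | mul e e' _ _ ih ih' => exact (ih _).trans (ih' x)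
  | inv e _ ih => simpa using (ih (e⁻¹ x)).symm

theorem LinearIsometryEquiv.inner_apply_eq_neg {e : V ≃ₗᵢ[ℝ] V} {χ : V} (he : e χ = -χ) (α : V) :
    ⟪e α, χ⟫_ℝ = -⟪α, χ⟫_ℝ := by
  rw [← e.inner_map_map α χ, he, inner_neg_right, neg_neg]

variable {Δ pos : Finset V} {χ : V}

theorem image_rW_mul {e : V ≃ₗᵢ[ℝ] V} (hΔ : ∀ α, e α ∈ Δ ↔ α ∈ Δ) (he : e χ = -χ) (n : ℤ)
    (w : V ≃ₗᵢ[ℝ] V) : e '' rW Δ pos χ n (w * e) = rW Δ pos χ (-n) w := by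
  ext β
  obtain ⟨α, rfl⟩ := e.surjective β
  simp only [e.injective.mem_set_image, rW, mem_ofPred_eq, hΔ, e.inner_apply_eq_neg he,
    Int.cast_neg, neg_inj, LinearIsometryEquiv.coe_mul, comp_apply]

theorem ncard_symmDiff_rW_mul {e : V ≃ₗᵢ[ℝ] V} (hΔ : ∀ α, e α ∈ Δ ↔ α ∈ Δ) (he : e χ = -χ)
    (n : ℤ) (w₁ w₂ : V ≃ₗᵢ[ℝ] V) :
    (symmDiff (rW Δ pos χ n (w₁ * e)) (rW Δ pos χ n (w₂ * e))).ncard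
      = (symmDiff (rW Δ pos χ (-n) w₁) (rW Δ pos χ (-n) w₂)).ncard := by
  rw [← ncard_image_of_injective _ e.injective, image_symmDiff e.injective,
    image_rW_mul hΔ he, image_rW_mul hΔ he]

theorem neg_image_rW_neg (hsym : ∀ α ∈ Δ, -α ∈ Δ) (hpart : ∀ α ∈ Δ, (α ∈ pos ↔ -α ∉ pos))
    {w : V ≃ₗᵢ[ℝ] V} (hw : ∀ α ∈ Δ, w α ∈ Δ) (n : ℤ) :
    Neg.neg '' rW Δ pos χ (-n) w = {α | α ∈ Δ ∧ ⟪α, χ⟫_ℝ = n} \ rW Δ pos χ n w := by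
  ext β
  obtain ⟨α, rfl⟩ := neg_surjective β
  have hneg : -α ∈ Δ ↔ α ∈ Δ := ⟨fun h => neg_neg α ▸ hsym _ h, hsym α⟩
  simp only [neg_injective.mem_set_image, rW, mem_sdiff, mem_ofPred_eq, hneg, inner_neg_left,
    map_neg, Int.cast_neg, neg_eq_iff_eq_neg]
  by_cases hα : α ∈ Δ
  · have := hpart _ (hw α hα)
    tauto
  · simp [hα]

theorem ncard_symmDiff_rW_neg (hsym : ∀ α ∈ Δ, -α ∈ Δ) (hpart : ∀ α ∈ Δ, (α ∈ pos ↔ -α ∉ pos))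
    {w₁ w₂ : V ≃ₗᵢ[ℝ] V} (hw₁ : ∀ α ∈ Δ, w₁ α ∈ Δ) (hw₂ : ∀ α ∈ Δ, w₂ α ∈ Δ) (n : ℤ) :
    (symmDiff (rW Δ pos χ (-n) w₁) (rW Δ pos χ (-n) w₂)).ncard
      = (symmDiff (rW Δ pos χ n w₁) (rW Δ pos χ n w₂)).ncard := by
  have hsub : ∀ w, rW Δ pos χ n w ⊆ {α | α ∈ Δ ∧ ⟪α, χ⟫_ℝ = n} := fun _ _ h => ⟨h.1, h.2.1⟩
  rw [← ncard_image_of_injective _ neg_injective, image_symmDiff neg_injective,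
    neg_image_rW_neg hsym hpart hw₁, neg_image_rW_neg hsym hpart hw₂,
    sdiff_symmDiff_sdiff_of_subset (hsub w₁) (hsub w₂)]

end RootSystem

theorem stmt5_general
    {V : Type*} [NormedAddCommGroup V] [InnerProductSpace ℝ V] [FiniteDimensional ℝ V]
    (Δ pos : Finset V) (χ : V)
    -- root system axioms: finite (a `Finset`), spanning, reduced, crystallographic,
    -- stable under negation and under the reflections `s_α`
    (hsym : ∀ α ∈ Δ, -α ∈ Δ)
    (hrefl : ∀ α ∈ Δ, ∀ β ∈ Δ, sRefl α β ∈ Δ)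
    -- positive roots and simple roots
    (hpart : ∀ α ∈ Δ, (α ∈ pos ↔ -α ∉ pos))
    -- the Weyl group, generated by the reflections in the roots
    (W : Subgroup (V ≃ₗᵢ[ℝ] V))
    (hW : W = Subgroup.closure {e : V ≃ₗᵢ[ℝ] V | ∃ α ∈ Δ, e = sRefl α})
    -- the longest element `w₀`, with `w₀ (Δ⁺) = −Δ⁺`
    (w0 : V ≃ₗᵢ[ℝ] V) (hw0W : w0 ∈ W)
    -- assume `w₀ χ = −χ`
    (hw0chi : w0 χ = -χ) :
    ∀ w₁ : V ≃ₗᵢ[ℝ] V, w₁ ∈ W → ∀ w₂ : V ≃ₗᵢ[ℝ] V, w₂ ∈ W →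
      tau Δ pos χ (w₁ * w0) (w₂ * w0) = tau Δ pos χ w₁ w₂ := by
  intro w₁ hw₁ w₂ hw₂
  have hWΔ : ∀ e ∈ W, ∀ α, e α ∈ Δ ↔ α ∈ Δ := by
    subst hW
    refine fun e he => LinearIsometryEquiv.apply_mem_iff_of_mem_closure Δ.finite_toSet ?_ he
    rintro _ ⟨α, hα, rfl⟩ β hβ
    exact hrefl α hα β hβ
  have hw0Δ := hWΔ w0 hw0W
  unfold tau
  rw [ncard_symmDiff_rW_mul hw0Δ hw0chi, ncard_symmDiff_rW_mul hw0Δ hw0chi, neg_zero,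
    ncard_symmDiff_rW_neg hsym hpart (fun α => (hWΔ w₁ hw₁ α).2) (fun α => (hWΔ w₂ hw₂ α).2)]

theorem stmt5
    {V : Type*} [NormedAddCommGroup V] [InnerProductSpace ℝ V] [FiniteDimensional ℝ V]
    (Δ pos Pi : Finset V) (χ : V)
    -- root system axioms: finite (a `Finset`), spanning, reduced, crystallographic,
    -- stable under negation and under the reflections `s_α`
    (hspan : Submodule.span ℝ (Δ : Set V) = ⊤)
    (hzero : (0 : V) ∉ Δ)
    (hsym : ∀ α ∈ Δ, -α ∈ Δ)
    (hred : ∀ α ∈ Δ, ∀ t : ℝ, t • α ∈ Δ → t = 1 ∨ t = -1)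
    (hcrys : ∀ α ∈ Δ, ∀ β ∈ Δ, ∃ n : ℤ, 2 * ⟪β, α⟫_ℝ / ⟪α, α⟫_ℝ = (n : ℝ))
    (hrefl : ∀ α ∈ Δ, ∀ β ∈ Δ, sRefl α β ∈ Δ)
    -- positive roots and simple roots
    (hposΔ : pos ⊆ Δ)
    (hpart : ∀ α ∈ Δ, (α ∈ pos ↔ -α ∉ pos))
    (hPipos : Pi ⊆ pos)
    (hindep : LinearIndependent ℝ (fun β : (Pi : Set V) => (β : V)))
    (hcomb : ∀ α ∈ pos, ∃ c : V → ℕ, α = ∑ β ∈ Pi, (c β : ℝ) • β)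
    -- the Weyl group, generated by the reflections in the roots
    (W : Subgroup (V ≃ₗᵢ[ℝ] V))
    (hW : W = Subgroup.closure {e : V ≃ₗᵢ[ℝ] V | ∃ α ∈ Δ, e = sRefl α})
    -- the longest element `w₀`, with `w₀ (Δ⁺) = −Δ⁺`
    (w0 : V ≃ₗᵢ[ℝ] V) (hw0W : w0 ∈ W)
    (hw0pos : (fun x => w0 x) '' (pos : Set V) = (fun x => -x) '' (pos : Set V))
    -- assume `w₀ χ = −χ`
    (hw0chi : w0 χ = -χ) :
    ∀ w₁ : V ≃ₗᵢ[ℝ] V, w₁ ∈ W → ∀ w₂ : V ≃ₗᵢ[ℝ] V, w₂ ∈ W →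
      tau Δ pos χ (w₁ * w0) (w₂ * w0) = tau Δ pos χ w₁ w₂ :=
  stmt5_general Δ pos χ hsym hrefl hpart W hW w0 hw0W hw0chi
end
end

section
/- Set c = #r₂(Δ) − #r₀(Δ). Then for all w₁, w₂ ∈ W one has τ(w₁, w₂) + τ(w₀ w₁, w₂) = c; in particular this sum is independent of w₁ and w₂. -/
/-!
Since `w₀` sends every positive root to a negative one, `w₀ w α` is positive exactly when `w α`
is not (as `w` permutes `Δ`), so `r_n(w₀ w₁)` is the complement of `r_n(w₁)` in `r_n(Δ)`. For
`A, B ⊆ S` with `S` finite, `#((S \ A) ∆ B) = #S - #(A ∆ B)`; apply this for `n = 2` and `n = 0`.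
-/

open scoped InnerProductSpace

noncomputable section

/-- `r_n(Δ) = {α ∈ Δ : ⟨α, χ⟩ = n}`. -/
def rAll {V : Type*} [NormedAddCommGroup V] [InnerProductSpace ℝ V]
    (Δ : Finset V) (χ : V) (n : ℤ) : Set V :=
  {α : V | α ∈ Δ ∧ ⟪α, χ⟫_ℝ = (n : ℝ)}

theorem Set.ncard_sdiff_symmDiff {α : Type*} {S A B : Set α} (hS : S.Finite) (hA : A ⊆ S)
    (hB : B ⊆ S) :
    ((symmDiff (S \ A) B).ncard : ℤ) = S.ncard - (symmDiff A B).ncard := by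
  have hAB : symmDiff A B ⊆ S := symmDiff_le_sup.trans (sup_le hA hB)
  rw [← symmDiff_of_ge hA, symmDiff_assoc, symmDiff_of_ge hAB,
    Set.ncard_sdiff hAB (hS.subset hAB), Nat.cast_sub (Set.ncard_le_ncard hAB hS)]

section RootSystem

variable {V : Type*} [NormedAddCommGroup V] [InnerProductSpace ℝ V]

theorem sRefl_inv [FiniteDimensional ℝ V] (α : V) : (sRefl α)⁻¹ = sRefl α :=
  Submodule.reflection_inv

theorem mapsTo_sRefl [FiniteDimensional ℝ V] {Δ : Finset V}
    (hrefl : ∀ α ∈ Δ, ∀ β ∈ Δ, sRefl α β ∈ Δ) {α : V} (hα : α ∈ Δ) :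
    Set.MapsTo (sRefl α) Δ Δ :=
  fun β hβ => hrefl α hα β hβ

theorem mapsTo_of_mem_closure_sRefl [FiniteDimensional ℝ V] {Δ : Finset V}
    (hrefl : ∀ α ∈ Δ, ∀ β ∈ Δ, sRefl α β ∈ Δ) {w : V ≃ₗᵢ[ℝ] V}
    (hw : w ∈ Subgroup.closure {e : V ≃ₗᵢ[ℝ] V | ∃ α ∈ Δ, e = sRefl α}) :
    Set.MapsTo w Δ Δ := by
  induction hw using Subgroup.closure_induction_left with
  | one => exact Set.mapsTo_id _
  | mul_left s hs w _ ih =>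
    obtain ⟨α, hα, rfl⟩ := hs
    exact (mapsTo_sRefl hrefl hα).comp ih
  | inv_mul_cancel s hs w _ ih =>
    obtain ⟨α, hα, rfl⟩ := hs
    rw [sRefl_inv]
    exact (mapsTo_sRefl hrefl hα).comp ih

theorem apply_mem_pos_iff_notMem_pos {Δ pos : Finset V} (hposΔ : pos ⊆ Δ)
    (hpart : ∀ α ∈ Δ, (α ∈ pos ↔ -α ∉ pos)) {w0 : V ≃ₗᵢ[ℝ] V}
    (hw0pos : (fun x => w0 x) '' (pos : Set V) = (fun x => -x) '' (pos : Set V))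
    {β : V} (hβ : β ∈ Δ) :
    w0 β ∈ pos ↔ β ∉ pos := by
  have hneg_pos : ∀ γ ∈ pos, -w0 γ ∈ pos := by
    intro γ hγ
    obtain ⟨δ, hδ, hδγ⟩ : w0 γ ∈ (fun x => -x) '' (pos : Set V) := hw0pos ▸ ⟨γ, hγ, rfl⟩
    simpa [← hδγ] using hδ
  constructor
  · intro h hβpos
    exact (hpart _ (hposΔ h)).mp h (hneg_pos β hβpos)
  · intro h
    have hnegβ : -β ∈ pos := not_not.mp (mt (hpart β hβ).mpr h)
    simpa using hneg_pos _ hnegβ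

theorem rW_subset_rAll (Δ pos : Finset V) (χ : V) (n : ℤ) (w : V ≃ₗᵢ[ℝ] V) :
    rW Δ pos χ n w ⊆ rAll Δ χ n :=
  fun _ hα => ⟨hα.1, hα.2.1⟩

theorem rAll_finite (Δ : Finset V) (χ : V) (n : ℤ) : (rAll Δ χ n).Finite :=
  Δ.finite_toSet.subset fun _ hα => hα.1

theorem rW_mul_eq_rAll_sdiff {Δ pos : Finset V} {χ : V} {n : ℤ} {w0 w : V ≃ₗᵢ[ℝ] V}
    (hflip : ∀ β ∈ Δ, (w0 β ∈ pos ↔ β ∉ pos)) (hw : Set.MapsTo w Δ Δ) :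
    rW Δ pos χ n (w0 * w) = rAll Δ χ n \ rW Δ pos χ n w := by
  ext α
  simp only [rW, rAll, Set.mem_ofPred_eq, Set.mem_sdiff, LinearIsometryEquiv.coe_mul,
    Function.comp_apply]
  constructor
  · rintro ⟨hαΔ, hαχ, hpos⟩
    exact ⟨⟨hαΔ, hαχ⟩, fun h => (hflip _ (hw hαΔ)).mp hpos h.2.2⟩
  · rintro ⟨⟨hαΔ, hαχ⟩, hnot⟩
    exact ⟨hαΔ, hαχ, (hflip _ (hw hαΔ)).mpr fun h => hnot ⟨hαΔ, hαχ, h⟩⟩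

theorem tau_add_tau_mul {Δ pos : Finset V} {χ : V} {w0 w₁ : V ≃ₗᵢ[ℝ] V}
    (hflip : ∀ β ∈ Δ, (w0 β ∈ pos ↔ β ∉ pos)) (hw₁ : Set.MapsTo w₁ Δ Δ) (w₂ : V ≃ₗᵢ[ℝ] V) :
    tau Δ pos χ w₁ w₂ + tau Δ pos χ (w0 * w₁) w₂ =
      ((rAll Δ χ 2).ncard : ℤ) - ((rAll Δ χ 0).ncard : ℤ) := by
  have hcompl (n : ℤ) :
      ((symmDiff (rW Δ pos χ n (w0 * w₁)) (rW Δ pos χ n w₂)).ncard : ℤ) =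
        (rAll Δ χ n).ncard - (symmDiff (rW Δ pos χ n w₁) (rW Δ pos χ n w₂)).ncard := by
    rw [rW_mul_eq_rAll_sdiff hflip hw₁]
    exact Set.ncard_sdiff_symmDiff (rAll_finite Δ χ n) (rW_subset_rAll ..) (rW_subset_rAll ..)
  simp only [tau, hcompl]
  ring

end RootSystem

theorem stmt6_general
    {V : Type*} [NormedAddCommGroup V] [InnerProductSpace ℝ V] [FiniteDimensional ℝ V]
    (Δ pos : Finset V) (χ : V)
    -- root system axioms: finite (a `Finset`), spanning, reduced, crystallographic,
    -- stable under negation and under the reflections `s_α`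
    (hrefl : ∀ α ∈ Δ, ∀ β ∈ Δ, sRefl α β ∈ Δ)
    -- positive roots and simple roots
    (hposΔ : pos ⊆ Δ)
    (hpart : ∀ α ∈ Δ, (α ∈ pos ↔ -α ∉ pos))
    -- the Weyl group, generated by the reflections in the roots
    (W : Subgroup (V ≃ₗᵢ[ℝ] V))
    (hW : W = Subgroup.closure {e : V ≃ₗᵢ[ℝ] V | ∃ α ∈ Δ, e = sRefl α})
    -- the longest element `w₀`, with `w₀ (Δ⁺) = −Δ⁺`
    (w0 : V ≃ₗᵢ[ℝ] V)
    (hw0pos : (fun x => w0 x) '' (pos : Set V) = (fun x => -x) '' (pos : Set V))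
    -- `c = #r₂(Δ) − #r₀(Δ)`
    (c : ℤ) (hc : c = ((rAll Δ χ 2).ncard : ℤ) - ((rAll Δ χ 0).ncard : ℤ)) :
    ∀ w₁ : V ≃ₗᵢ[ℝ] V, w₁ ∈ W → ∀ w₂ : V ≃ₗᵢ[ℝ] V, w₂ ∈ W →
      tau Δ pos χ w₁ w₂ + tau Δ pos χ (w0 * w₁) w₂ = c := by
  intro w₁ hw₁ w₂ _
  subst hW hc
  exact tau_add_tau_mul (fun β hβ => apply_mem_pos_iff_notMem_pos hposΔ hpart hw0pos hβ)
    (mapsTo_of_mem_closure_sRefl hrefl hw₁) w₂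

theorem stmt6
    {V : Type*} [NormedAddCommGroup V] [InnerProductSpace ℝ V] [FiniteDimensional ℝ V]
    (Δ pos Pi : Finset V) (χ : V)
    -- root system axioms: finite (a `Finset`), spanning, reduced, crystallographic,
    -- stable under negation and under the reflections `s_α`
    (hspan : Submodule.span ℝ (Δ : Set V) = ⊤)
    (hzero : (0 : V) ∉ Δ)
    (hsym : ∀ α ∈ Δ, -α ∈ Δ)
    (hred : ∀ α ∈ Δ, ∀ t : ℝ, t • α ∈ Δ → t = 1 ∨ t = -1)
    (hcrys : ∀ α ∈ Δ, ∀ β ∈ Δ, ∃ n : ℤ, 2 * ⟪β, α⟫_ℝ / ⟪α, α⟫_ℝ = (n : ℝ))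
    (hrefl : ∀ α ∈ Δ, ∀ β ∈ Δ, sRefl α β ∈ Δ)
    -- positive roots and simple roots
    (hposΔ : pos ⊆ Δ)
    (hpart : ∀ α ∈ Δ, (α ∈ pos ↔ -α ∉ pos))
    (hPipos : Pi ⊆ pos)
    (hindep : LinearIndependent ℝ (fun β : (Pi : Set V) => (β : V)))
    (hcomb : ∀ α ∈ pos, ∃ c : V → ℕ, α = ∑ β ∈ Pi, (c β : ℝ) • β)
    -- the Weyl group, generated by the reflections in the roots
    (W : Subgroup (V ≃ₗᵢ[ℝ] V))
    (hW : W = Subgroup.closure {e : V ≃ₗᵢ[ℝ] V | ∃ α ∈ Δ, e = sRefl α})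
    -- the longest element `w₀`, with `w₀ (Δ⁺) = −Δ⁺`
    (w0 : V ≃ₗᵢ[ℝ] V) (hw0W : w0 ∈ W)
    (hw0pos : (fun x => w0 x) '' (pos : Set V) = (fun x => -x) '' (pos : Set V))
    -- `c = #r₂(Δ) − #r₀(Δ)`
    (c : ℤ) (hc : c = ((rAll Δ χ 2).ncard : ℤ) - ((rAll Δ χ 0).ncard : ℤ)) :
    ∀ w₁ : V ≃ₗᵢ[ℝ] V, w₁ ∈ W → ∀ w₂ : V ≃ₗᵢ[ℝ] V, w₂ ∈ W →
      tau Δ pos χ w₁ w₂ + tau Δ pos χ (w0 * w₁) w₂ = c :=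
  stmt6_general Δ pos χ hrefl hposΔ hpart W hW w0 hw0pos c hc
end
end

section
/- Let Π be a finite set with n elements, and let ℚ(v) be the field of rational functions in one variable v over ℚ. The 2ⁿ × 2ⁿ matrix whose rows and columns are indexed by the subsets of Π, with (S,T)-entry equal to (−v)^{#(S ∨ T)} (where ∨ is symmetric difference), is invertible over ℚ(v). -/
/-!
Write `M x` for the matrix `(x ^ #(S ∆ T))_{S,T}`. Whether `i` lies in `S ∆ U` and in `U ∆ T`
depends only on the memberships of `i` in `S`, `T`, `U`, so each entry of `M x * M y` is a sum
over `U` of products over `i`, which factors as `∏ i, (x + y if i ∈ S ∆ T, else 1 + x y)`.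
Taking `y = -x` kills every off-diagonal entry: `M x * M (-x) = (1 - x²)ⁿ • 1`, and `1 - v²`
is nonzero in `ℚ(v)`.
-/

open Finset

section

variable {ι R : Type*} [Fintype ι] [DecidableEq ι] [CommRing R]

namespace Finset

theorem pow_card_eq_prod_ite (x : R) (A : Finset ι) :
    x ^ #A = ∏ i, if i ∈ A then x else 1 := by
  rw [prod_ite_mem, univ_inter, prod_const]

theorem sum_pow_card_symmDiff_mul_pow_card_symmDiff (x y : R) (S T : Finset ι) :
    ∑ U : Finset ι, x ^ #(symmDiff S U) * y ^ #(symmDiff U T)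
      = ∏ i, if i ∈ symmDiff S T then x + y else 1 + x * y := by
  set a : ι → R := fun i => (if i ∈ S then 1 else x) * (if i ∈ T then 1 else y)
  set b : ι → R := fun i => (if i ∈ S then x else 1) * (if i ∈ T then y else 1)
  have hterm (U : Finset ι) :
      x ^ #(symmDiff S U) * y ^ #(symmDiff U T) = (∏ i ∈ U, a i) * ∏ i ∈ Uᶜ, b i := by
    calc x ^ #(symmDiff S U) * y ^ #(symmDiff U T) = ∏ i, U.piecewise a b i := by
          rw [pow_card_eq_prod_ite, pow_card_eq_prod_ite, ← prod_mul_distrib]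
          refine prod_congr rfl fun i _ => ?_
          simp only [mem_symmDiff, piecewise, a, b]
          by_cases hS : i ∈ S <;> by_cases hT : i ∈ T <;> by_cases hU : i ∈ U <;>
            simp [hS, hT, hU]
      _ = (∏ i ∈ U, a i) * ∏ i ∈ Uᶜ, b i := by
          rw [prod_piecewise, univ_inter, compl_eq_univ_sdiff]
  rw [sum_congr rfl fun U _ => hterm U, ← Fintype.prod_add]
  refine prod_congr rfl fun i _ => ?_
  simp only [mem_symmDiff, a, b]
  by_cases hS : i ∈ S <;> by_cases hT : i ∈ T <;> simp [hS, hT] <;> ring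

end Finset

def symmDiffPowMatrix (ι : Type*) [DecidableEq ι] (x : R) :
    Matrix (Finset ι) (Finset ι) R :=
  Matrix.of fun S T => x ^ #(symmDiff S T)

theorem symmDiffPowMatrix_mul_neg (x : R) :
    symmDiffPowMatrix ι x * symmDiffPowMatrix ι (-x) = (1 - x ^ 2) ^ Fintype.card ι • 1 := by
  ext S T
  simp only [symmDiffPowMatrix, Matrix.mul_apply, Matrix.of_apply, Matrix.smul_apply,
    Matrix.one_apply, sum_pow_card_symmDiff_mul_pow_card_symmDiff, add_neg_cancel, smul_eq_mul,
    mul_ite, mul_one, mul_zero]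
  split_ifs with hST
  · simp [hST, sq, sub_eq_add_neg]
  · obtain ⟨i, hi⟩ : (symmDiff S T).Nonempty := by
      rwa [nonempty_iff_ne_empty, ne_eq, ← bot_eq_empty, symmDiff_eq_bot]
    exact prod_eq_zero (mem_univ i) (if_pos hi)

theorem isUnit_symmDiffPowMatrix {x : R} (h : IsUnit (1 - x ^ 2)) :
    IsUnit (symmDiffPowMatrix ι x) := by
  have hc := h.pow (Fintype.card ι)
  refine (Matrix.isUnit_iff_isUnit_det _).2 (Matrix.isUnit_det_of_right_inverse
    (B := (↑hc.unit⁻¹ : R) • symmDiffPowMatrix ι (-x)) ?_)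
  rw [Matrix.mul_smul, symmDiffPowMatrix_mul_neg, smul_smul, hc.val_inv_mul, one_smul]

theorem RatFunc.one_sub_X_sq_ne_zero {K : Type*} [CommRing K] [IsDomain K] :
    (1 - RatFunc.X ^ 2 : RatFunc K) ≠ 0 := by
  rw [← RatFunc.algebraMap_X, ← map_pow, ← map_one (algebraMap (Polynomial K) (RatFunc K)),
    ← map_sub, ne_eq, map_eq_zero_iff _ (IsFractionRing.injective _ _)]
  intro h
  simpa using congrArg (Polynomial.eval 0) h

end

theorem stmt15_general {ι : Type*} [Fintype ι] [DecidableEq ι] :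
    IsUnit
      (Matrix.of fun S T : Finset ι =>
        (-(RatFunc.X : RatFunc ℚ)) ^ (symmDiff S T).card) :=
  isUnit_symmDiffPowMatrix <| by
    rw [neg_sq]
    exact isUnit_iff_ne_zero.2 RatFunc.one_sub_X_sq_ne_zero

/-- For a finite set of cardinality `n`, the `2ⁿ × 2ⁿ` matrix indexed by subsets, with
`(S,T)` entry `(−v)^{#(S ∆ T)}`, is invertible over `ℚ(v)`. -/
theorem stmt15 {ι : Type*} [Fintype ι] [DecidableEq ι] (n : ℕ)
    (hn : Fintype.card ι = n) :
    IsUnit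
      (Matrix.of fun S T : Finset ι =>
        (-(RatFunc.X : RatFunc ℚ)) ^ (symmDiff S T).card) :=
  stmt15_general
end
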